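/- int_Reg(Vertex Cover) is decidable: there is an algorithm (a computable function on finite encodings of NFAs) that, given an arbitrary NFA M over the alphabet Σ = {▷, 1, a, #, $}, decides whether there exists a word w ∈ L(M) ∩ Enc such that decode(w) is a positive Vertex Cover instance. -/

import Mathlib

/-- The fixed five-letter alphabet Σ = {▷, 1, a, #, $}. -/
inductive Letter : Type
  | tri    -- ▷
  | one    -- 1
  | lett   -- a
  | hash   -- #
  | dollar -- $
deriving DecidableEq

/-- Words over the alphabet Σ. -/
abbrev Word := List Letter

/-- The threshold token `▷1^k$`. -/
def thresholdTok (k : ℕ) : Word := Letter.tri :: (List.replicate k Letter.one ++ [Letter.dollar])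

/-- The left vertex token `▷a^p#`. -/
def leftTok (p : ℕ) : Word := Letter.tri :: (List.replicate p Letter.lett ++ [Letter.hash])

/-- The right vertex token `▷a^q$`. -/
def rightTok (q : ℕ) : Word := Letter.tri :: (List.replicate q Letter.lett ++ [Letter.dollar])

/-- The encoding `▷1^k$ ∏_i (▷a^{p_i}# ▷a^{q_i}$)` of a threshold `k` together with a
list of (encoded) edges. -/
def encode (k : ℕ) (es : List (ℕ × ℕ)) : Word :=
  thresholdTok k ++ (es.map (fun e => leftTok e.1 ++ rightTok e.2)).flatten

/-- The regular language `Enc = ▷1*$(▷a*#▷a*$)*` of all encodings. -/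
def Enc : Set Word := { w | ∃ (k : ℕ) (es : List (ℕ × ℕ)), w = encode k es }

/-- A token: a threshold token, a left vertex token, or a right vertex token. -/
def IsToken (w : Word) : Prop :=
  (∃ k, w = thresholdTok k) ∨ (∃ p, w = leftTok p) ∨ (∃ q, w = rightTok q)

/-- A representative function is token-preserving if all representatives are tokens. -/
def TokenPreserving {Q : Type} (rep : Q → Q → Set Word) : Prop :=
  ∀ p q : Q, ∀ w ∈ rep p q, IsToken w

/-- A finite simple undirected graph with vertices named by natural numbers:
a finite vertex set and a finite set of undirected edges. -/
structure EncGraph where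
  V : Finset ℕ
  E : Finset (Sym2 ℕ)

/-- `G` has a vertex cover of size at most `k`. -/
def HasVC (G : EncGraph) (k : ℕ) : Prop :=
  ∃ S : Finset ℕ, S ⊆ G.V ∧ S.card ≤ k ∧ ∀ e ∈ G.E, ∃ a ∈ S, a ∈ e

/-- `G` has an independent set of size at least `k`. -/
def HasIS (G : EncGraph) (k : ℕ) : Prop :=
  ∃ S : Finset ℕ, S ⊆ G.V ∧ k ≤ S.card ∧ ∀ a ∈ S, ∀ b ∈ S, s(a, b) ∉ G.E

/-- The graph described by a list of (encoded) edges: vertices are all the numbers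
occurring, edges are the non-loop pairs. -/
def graphOf (es : List (ℕ × ℕ)) : EncGraph where
  V := (es.map Prod.fst).toFinset ∪ (es.map Prod.snd).toFinset
  E := ((es.filter (fun e => e.1 ≠ e.2)).map (fun e => s(e.1, e.2))).toFinset

/-- `decode(w) = (G, k)` : the word `w ∈ Enc` encodes the graph `G` and threshold `k`. -/
def decodesTo (w : Word) (G : EncGraph) (k : ℕ) : Prop :=
  ∃ es : List (ℕ × ℕ), w = encode k es ∧ G = graphOf es

def letterEquiv : Letter ≃ Fin 5 where
  toFun s :=
    match s with
    | Letter.tri => 0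
    | Letter.one => 1
    | Letter.lett => 2
    | Letter.hash => 3
    | Letter.dollar => 4
  invFun n :=
    if n = 0 then Letter.tri
    else if n = 1 then Letter.one
    else if n = 2 then Letter.lett
    else if n = 3 then Letter.hash
    else Letter.dollar
  left_inv s := by cases s <;> rfl
  right_inv n := by fin_cases n <;> rfl

instance : Primcodable Letter := Primcodable.ofEquiv (Fin 5) letterEquiv

/-- A finite encoding of an NFA over `Letter` with states named by natural numbers:
a list of transition triples, an initial state, and a list of final states. -/
abbrev NFAEnc : Type := List (ℕ × Letter × ℕ) × ℕ × List ℕ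

/-- One transition step of an encoded NFA on a set of states. -/
def encStep (T : List (ℕ × Letter × ℕ)) (S : Set ℕ) (x : Letter) : Set ℕ :=
  { q' | ∃ q ∈ S, (q, x, q') ∈ T }

/-- The language accepted by an encoded NFA. -/
def encLang (M : NFAEnc) : Set Word :=
  { w | ∃ qf ∈ M.2.2, qf ∈ w.foldl (encStep M.1) {M.2.1} }

/-!
The search for a witness can be bounded. Let `Q` be the set of states entered by some transition
of `M`. After the first letter of a token every run stays in `Q`, so:

* the sets of states reachable by reading `m` tokens chosen among the edge tokens of a witness
  evolve deterministically in `m` inside the `2 ^ |Q|` subsets of `Q`, hence any state reachable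
  at all is reachable with fewer than `2 ^ |Q|` edge tokens taken from the witness;
* the relation on `Q` induced by a block `a ^ v` is determined by the one induced by `a ^ (v - 1)`,
  hence every `v` can be replaced, simultaneously in all tokens, by some `v' < 2 ^ (|Q| * |Q|)`
  inducing the same relation; the same applies to the threshold `1 ^ k`, moved into a window
  above the bound on the number of edges, where a cover of size at most `k` exists trivially.

Dropping edges and identifying vertices never increases the minimum size of a vertex cover, so
the bounded witness is still a positive instance, and the bounded search is primitive recursive.
-/

theorem exists_lt_card_eq_of_succ_congr {β : Type*} {P : ℕ → β} {s : Finset β}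
    (hs : ∀ n, P n ∈ s) (hP : ∀ i j, P i = P j → P (i + 1) = P (j + 1)) (n : ℕ) :
    ∃ m < s.card, P m = P n := by
  induction n using Nat.strong_induction_on with
  | _ n ih =>
  rcases lt_or_ge n s.card with hn | hn
  · exact ⟨n, hn, rfl⟩
  obtain ⟨i, hi, j, hj, hij, hPij⟩ := Finset.exists_ne_map_eq_of_card_lt_of_maps_to
    (s := Finset.range (s.card + 1)) (by simp) (fun m _ => hs m)
  wlog hlt : i < j generalizing i j
  · exact this j hj i hi hij.symm hPij.symm (by omega)
  have hshift : ∀ t, P (i + t) = P (j + t) := fun t => by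
    induction t with
    | zero => exact hPij
    | succ t iht => exact hP _ _ iht
  simp only [Finset.mem_range] at hj
  obtain ⟨m, hm, hPm⟩ := ih (i + (n - j)) (by omega)
  exact ⟨m, hm, by rw [hPm, hshift, Nat.add_sub_cancel' (by omega)]⟩

namespace NFA

variable {α σ : Type*} (A : NFA α σ) {S : Finset σ}

theorem mem_evalFrom_append {R : Set σ} {q : σ} {u w : List α} :
    q ∈ A.evalFrom R (u ++ w) ↔ ∃ r ∈ A.evalFrom R u, q ∈ A.evalFrom {r} w := by
  rw [evalFrom_append, mem_evalFrom_iff_exists]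

theorem evalFrom_eq_of_forall_singleton {u u' : List α}
    (h : ∀ s ∈ S, A.evalFrom {s} u = A.evalFrom {s} u') {R : Set σ} (hR : R ⊆ S) :
    A.evalFrom R u = A.evalFrom R u' := by
  rw [evalFrom_eq_biUnion_singleton, evalFrom_eq_biUnion_singleton]
  exact Set.iUnion₂_congr fun s hs => h s (hR hs)

theorem evalFrom_flatMap_congr {β : Type*} {t t' : β → List α} {es : List β}
    (h : ∀ e ∈ es, ∀ R, A.evalFrom R (t e) = A.evalFrom R (t' e)) (R : Set σ) :
    A.evalFrom R (es.flatMap t) = A.evalFrom R (es.flatMap t') := by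
  induction es generalizing R with
  | nil => rfl
  | cons e es ih =>
    simp only [List.flatMap_cons, evalFrom_append]
    rw [h e (by simp), ih fun e he => h e (by simp [he])]

variable (hS : ∀ q a, A.step q a ⊆ S)
include hS

theorem stepSet_subset (R : Set σ) (a : α) : A.stepSet R a ⊆ S := fun q hq => by
  obtain ⟨t, -, ht⟩ := mem_stepSet.1 hq
  exact hS t a ht

theorem evalFrom_subset {R : Set σ} (hR : R ⊆ S) (w : List α) : A.evalFrom R w ⊆ S := by
  induction w generalizing R with
  | nil => exact hR
  | cons a w ih => exact ih (A.stepSet_subset hS R a)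

theorem evalFrom_cons_subset (R : Set σ) (a : α) (w : List α) : A.evalFrom R (a :: w) ⊆ S :=
  A.evalFrom_subset hS (A.stepSet_subset hS R a) w

theorem evalFrom_cons_append_eq {u u' : List α}
    (h : ∀ s ∈ S, A.evalFrom {s} u = A.evalFrom {s} u') (R : Set σ) (a : α) (w : List α) :
    A.evalFrom R (a :: (u ++ w)) = A.evalFrom R (a :: (u' ++ w)) := by
  simp only [evalFrom_cons, evalFrom_append]
  rw [A.evalFrom_eq_of_forall_singleton h (A.stepSet_subset hS R a)]

theorem exists_evalFrom_replicate_eq (c : α) {L v : ℕ} (hv : L ≤ v) :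
    ∃ v', L ≤ v' ∧ v' < L + 2 ^ (S.card * S.card) ∧
      ∀ s ∈ S, A.evalFrom {s} (List.replicate v' c) = A.evalFrom {s} (List.replicate v c) := by
  classical
  let P : ℕ → Finset (σ × σ) := fun t =>
    (S ×ˢ S).filter fun p => p.2 ∈ A.evalFrom {p.1} (List.replicate (L + t) c)
  have mem_P : ∀ t, ∀ s ∈ S, ∀ r, (s, r) ∈ P t ↔ r ∈ A.evalFrom {s} (List.replicate (L + t) c) :=
    fun t s hs r => by
      simpa [P, hs] using fun h => A.evalFrom_subset hS (by simpa using hs) _ h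
  have mem_P_succ : ∀ t, ∀ s ∈ S, ∀ r,
      (s, r) ∈ P (t + 1) ↔ ∃ x ∈ S, (s, x) ∈ P t ∧ r ∈ A.step x c := fun t s hs r => by
    rw [mem_P _ s hs, ← add_assoc, List.replicate_succ', mem_evalFrom_append]
    simp only [evalFrom_singleton, stepSet_singleton]
    exact ⟨fun ⟨x, hx, hr⟩ => ⟨x, A.evalFrom_subset hS (by simpa using hs) _ hx,
      (mem_P _ s hs x).2 hx, hr⟩, fun ⟨x, _, hx, hr⟩ => ⟨x, (mem_P _ s hs x).1 hx, hr⟩⟩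
  have P_succ_congr : ∀ i j, P i = P j → P (i + 1) = P (j + 1) := fun i j hij => by
    ext ⟨s, r⟩
    by_cases hs : s ∈ S
    · rw [mem_P_succ _ s hs, mem_P_succ _ s hs, hij]
    · have hP : ∀ t, (s, r) ∉ P t := fun t h =>
        hs (Finset.mem_product.1 (Finset.mem_filter.1 h).1).1
      simp only [hP]
  obtain ⟨m, hm, hPm⟩ := exists_lt_card_eq_of_succ_congr (P := P) (s := (S ×ˢ S).powerset)
    (fun t => Finset.mem_powerset.2 (Finset.filter_subset _ _)) P_succ_congr (v - L)
  refine ⟨L + m, by omega, by simpa [Finset.card_product] using hm, fun s hs => ?_⟩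
  ext r
  rw [← mem_P m s hs, hPm, mem_P _ s hs, Nat.add_sub_cancel' hv]

theorem exists_short_mem_evalFrom_flatMap {β : Type*} (tok : β → List α) {R : Set σ} (hR : R ⊆ S)
    {es : List β} {q : σ} (h : q ∈ A.evalFrom R (es.flatMap tok)) :
    ∃ es' : List β, es'.length < 2 ^ S.card ∧ es' ⊆ es ∧ q ∈ A.evalFrom R (es'.flatMap tok) := by
  classical
  let P : ℕ → Finset σ := fun n => S.filter fun r =>
    ∃ es' : List β, es'.length = n ∧ es' ⊆ es ∧ r ∈ A.evalFrom R (es'.flatMap tok)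
  have mem_P_succ : ∀ n r, r ∈ P (n + 1) ↔
      r ∈ S ∧ ∃ t ∈ P n, ∃ e ∈ es, r ∈ A.evalFrom {t} (tok e) := fun n r => by
    show r ∈ S.filter _ ↔ _
    rw [Finset.mem_filter]
    refine and_congr_right fun _ => ⟨?_, ?_⟩
    · rintro ⟨es', hlen, hsub, hr⟩
      obtain ⟨init, e, rfl⟩ := (List.eq_nil_or_concat' es').resolve_left
        (List.ne_nil_of_length_eq_add_one hlen)
      rw [List.flatMap_append, List.flatMap_singleton, mem_evalFrom_append] at hr
      obtain ⟨t, ht, hr⟩ := hr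
      refine ⟨t, Finset.mem_filter.2 ⟨A.evalFrom_subset hS hR _ ht, init, by simpa using hlen,
        fun _ he => hsub (by simp [he]), ht⟩, e, hsub (by simp), hr⟩
    · rintro ⟨t, ht, e, he, hr⟩
      obtain ⟨-, init, hlen, hsub, ht⟩ := Finset.mem_filter.1 ht
      refine ⟨init ++ [e], by simp [hlen], List.append_subset.2 ⟨hsub, by simpa using he⟩, ?_⟩
      rw [List.flatMap_append, List.flatMap_singleton, mem_evalFrom_append]
      exact ⟨t, ht, hr⟩
  obtain ⟨m, hm, hPm⟩ := exists_lt_card_eq_of_succ_congr (P := P) (s := S.powerset)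
    (fun n => Finset.mem_powerset.2 (Finset.filter_subset _ _))
    (fun i j hij => by ext r; rw [mem_P_succ, mem_P_succ, hij]) es.length
  have hq : q ∈ P es.length :=
    Finset.mem_filter.2 ⟨A.evalFrom_subset hS hR _ h, es, rfl, List.Subset.refl _, h⟩
  rw [← hPm] at hq
  obtain ⟨-, es', rfl, hsub, hes'⟩ := Finset.mem_filter.1 hq
  exact ⟨es', by simpa using hm, hsub, hes'⟩

end NFA

theorem mem_graphOf_V {es : List (ℕ × ℕ)} {a : ℕ} :
    a ∈ (graphOf es).V ↔ a ∈ es.map Prod.fst ++ es.map Prod.snd := by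
  simp [graphOf]

theorem covers_graphOf_iff {es : List (ℕ × ℕ)} {C : Finset ℕ} :
    (∀ e ∈ (graphOf es).E, ∃ a ∈ C, a ∈ e) ↔ ∀ e ∈ es, e.1 ≠ e.2 → e.1 ∈ C ∨ e.2 ∈ C := by
  simp only [graphOf, List.mem_toFinset, List.mem_map, List.mem_filter, decide_eq_true_eq]
  constructor
  · intro h e he hne
    obtain ⟨a, ha, hae⟩ := h _ ⟨e, ⟨he, hne⟩, rfl⟩
    rcases Sym2.mem_iff.1 hae with rfl | rfl
    exacts [Or.inl ha, Or.inr ha]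
  · rintro h _ ⟨e, ⟨he, hne⟩, rfl⟩
    rcases h e he hne with h' | h'
    exacts [⟨_, h', Sym2.mem_mk_left _ _⟩, ⟨_, h', Sym2.mem_mk_right _ _⟩]

theorem hasVC_graphOf_iff {es : List (ℕ × ℕ)} {k : ℕ} :
    HasVC (graphOf es) k ↔ ∃ C : Finset ℕ, (∀ a ∈ C, a ∈ es.map Prod.fst ++ es.map Prod.snd) ∧
      C.card ≤ k ∧ ∀ e ∈ es, e.1 ≠ e.2 → e.1 ∈ C ∨ e.2 ∈ C := by
  simp only [HasVC, covers_graphOf_iff, ← mem_graphOf_V]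
  rfl

theorem hasVC_of_length_le {es : List (ℕ × ℕ)} {k : ℕ} (h : es.length ≤ k) :
    HasVC (graphOf es) k := by
  refine hasVC_graphOf_iff.2 ⟨(es.map Prod.fst).toFinset, fun a ha => ?_, ?_, ?_⟩
  · exact List.mem_append_left _ (List.mem_toFinset.1 ha)
  · exact (List.toFinset_card_le _).trans (by simpa using h)
  · exact fun e he _ => Or.inl (List.mem_toFinset.2 (List.mem_map_of_mem he))

theorem HasVC.of_subset_map {es es' : List (ℕ × ℕ)} {k : ℕ} (f : ℕ → ℕ)
    (h : es' ⊆ es.map (Prod.map f f)) (hvc : HasVC (graphOf es) k) :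
    HasVC (graphOf es') k := by
  classical
  obtain ⟨C, -, hCk, hcov⟩ := hasVC_graphOf_iff.1 hvc
  refine hasVC_graphOf_iff.2 ⟨(C.image f).filter (· ∈ es'.map Prod.fst ++ es'.map Prod.snd),
    fun a ha => (Finset.mem_filter.1 ha).2,
    (Finset.card_filter_le _ _).trans (Finset.card_image_le.trans hCk), ?_⟩
  rintro _ he' hne'
  obtain ⟨e, he, rfl⟩ := List.mem_map.1 (h he')
  have hne : e.1 ≠ e.2 := fun heq => hne' (by simp [heq])
  simp only [Finset.mem_filter, Finset.mem_image, Prod.map_fst, Prod.map_snd]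
  rcases hcov e he hne with hC | hC
  exacts [Or.inl ⟨⟨_, hC, rfl⟩, List.mem_append_left _ (List.mem_map_of_mem he')⟩,
    Or.inr ⟨⟨_, hC, rfl⟩, List.mem_append_right _ (List.mem_map_of_mem he')⟩]

theorem hasVC_graphOf_iff_sublists {es : List (ℕ × ℕ)} {k : ℕ} :
    HasVC (graphOf es) k ↔ ∃ C ∈ (es.map Prod.fst ++ es.map Prod.snd).sublists,
      C.length ≤ k ∧ ∀ e ∈ es, e.1 = e.2 ∨ e.1 ∈ C ∨ e.2 ∈ C := by
  classical
  rw [hasVC_graphOf_iff]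
  constructor
  · rintro ⟨C, hCV, hCk, hcov⟩
    set C' := (es.map Prod.fst ++ es.map Prod.snd).dedup.filter (· ∈ C)
    have hC' : ∀ a, a ∈ C' ↔ a ∈ C := fun a => by
      simp only [C', List.mem_filter, List.mem_dedup, decide_eq_true_eq]
      exact ⟨And.right, fun h => ⟨hCV a h, h⟩⟩
    refine ⟨C', List.mem_sublists.2 ((List.filter_sublist).trans (List.dedup_sublist _)), ?_,
      fun e he => ?_⟩
    · have hC'C : C'.toFinset = C := Finset.ext fun a => by rw [List.mem_toFinset, hC']
      rw [← List.toFinset_card_of_nodup ((List.nodup_dedup _).filter _), hC'C]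
      exact hCk
    · by_cases hne : e.1 = e.2
      · exact Or.inl hne
      · rcases hcov e he hne with h | h
        exacts [Or.inr (Or.inl ((hC' _).2 h)), Or.inr (Or.inr ((hC' _).2 h))]
  · rintro ⟨C, hC, hCk, hcov⟩
    refine ⟨C.toFinset, fun a ha => (List.mem_sublists.1 hC).subset (List.mem_toFinset.1 ha),
      (List.toFinset_card_le _).trans hCk, fun e he hne => ?_⟩
    simpa [hne] using hcov e he

namespace NFAEnc

variable (M : NFAEnc)

def toNFA : NFA Letter ℕ where
  step q c := {r | (q, c, r) ∈ M.1}
  start := {M.2.1}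
  accept := {q | q ∈ M.2.2}

def targets : Finset ℕ := (M.1.map fun t => t.2.2).toFinset

theorem step_subset_targets (q : ℕ) (c : Letter) : M.toNFA.step q c ⊆ M.targets :=
  fun _ hq' => List.mem_toFinset.2 (List.mem_map.2 ⟨_, hq', rfl⟩)

theorem card_targets_le : M.targets.card ≤ M.1.length :=
  (List.toFinset_card_le _).trans (List.length_map _).le

theorem mem_encLang_iff {w : Word} : w ∈ encLang M ↔ w ∈ M.toNFA.accepts := by
  have hstep : encStep M.1 = M.toNFA.stepSet := by
    ext S c q
    simp [encStep, NFA.stepSet, toNFA]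
  simp only [encLang, hstep]
  rfl

def edgeTok (e : ℕ × ℕ) : Word := leftTok e.1 ++ rightTok e.2

theorem encode_eq (k : ℕ) (es : List (ℕ × ℕ)) :
    encode k es = thresholdTok k ++ es.flatMap edgeTok := by
  rw [encode, List.flatMap_def]
  rfl

theorem exists_evalFrom_thresholdTok_eq {L k : ℕ} (hk : L ≤ k) :
    ∃ k', L ≤ k' ∧ k' < L + 2 ^ (M.targets.card * M.targets.card) ∧
      ∀ R, M.toNFA.evalFrom R (thresholdTok k') = M.toNFA.evalFrom R (thresholdTok k) := by
  obtain ⟨k', hLk', hk', h⟩ :=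
    M.toNFA.exists_evalFrom_replicate_eq M.step_subset_targets Letter.one hk
  exact ⟨k', hLk', hk', fun R => M.toNFA.evalFrom_cons_append_eq M.step_subset_targets h R _ _⟩

theorem exists_evalFrom_edgeTok_map_eq :
    ∃ f : ℕ → ℕ, (∀ v, f v < 2 ^ (M.targets.card * M.targets.card)) ∧
      ∀ e R, M.toNFA.evalFrom R (edgeTok (Prod.map f f e)) = M.toNFA.evalFrom R (edgeTok e) := by
  choose f hf using fun v =>
    M.toNFA.exists_evalFrom_replicate_eq M.step_subset_targets Letter.lett (Nat.zero_le v)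
  have htok : ∀ c v R, M.toNFA.evalFrom R (Letter.tri :: (List.replicate (f v) Letter.lett ++ [c]))
      = M.toNFA.evalFrom R (Letter.tri :: (List.replicate v Letter.lett ++ [c])) :=
    fun c v R => M.toNFA.evalFrom_cons_append_eq M.step_subset_targets (hf v).2.2 R _ _
  refine ⟨f, fun v => by simpa using (hf v).2.1, fun e R => ?_⟩
  simp only [edgeTok, leftTok, rightTok, NFA.evalFrom_append, Prod.map_fst, Prod.map_snd, htok]

theorem exists_small_edges {R : Set ℕ} (hR : R ⊆ M.targets) {es : List (ℕ × ℕ)} {q : ℕ}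
    (h : q ∈ M.toNFA.evalFrom R (es.flatMap edgeTok)) :
    ∃ es' : List (ℕ × ℕ), es'.length < 2 ^ M.targets.card ∧
      (∀ e ∈ es', e.1 < 2 ^ (M.targets.card * M.targets.card) ∧
        e.2 < 2 ^ (M.targets.card * M.targets.card)) ∧
      (∀ k, HasVC (graphOf es) k → HasVC (graphOf es') k) ∧
      q ∈ M.toNFA.evalFrom R (es'.flatMap edgeTok) := by
  obtain ⟨es₁, hlen, hsub, hq⟩ :=
    M.toNFA.exists_short_mem_evalFrom_flatMap M.step_subset_targets edgeTok hR h
  obtain ⟨f, hf, hfeq⟩ := M.exists_evalFrom_edgeTok_map_eq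
  refine ⟨es₁.map (Prod.map f f), by simpa using hlen, ?_,
    fun k hvc => hvc.of_subset_map f (List.map_subset _ hsub), ?_⟩
  · simp only [List.mem_map]
    rintro _ ⟨e, -, rfl⟩
    exact ⟨hf _, hf _⟩
  · rwa [List.flatMap_map, M.toNFA.evalFrom_flatMap_congr fun e _ => hfeq e]

def searchBound : ℕ := 2 ^ (M.1.length * M.1.length)

theorem exists_bounded_witness {k : ℕ} {es : List (ℕ × ℕ)} (hacc : encode k es ∈ encLang M)
    (hvc : HasVC (graphOf es) k) :
    ∃ k' < 2 * M.searchBound, ∃ es' : List (ℕ × ℕ), es'.length ≤ M.searchBound ∧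
      (∀ e ∈ es', e.1 < M.searchBound ∧ e.2 < M.searchBound) ∧
      encode k' es' ∈ encLang M ∧ HasVC (graphOf es') k' := by
  have hn := M.card_targets_le
  have hB₁ : 2 ^ M.targets.card ≤ M.searchBound :=
    Nat.pow_le_pow_right two_pos (hn.trans (Nat.le_mul_self _))
  have hB₂ : 2 ^ (M.targets.card * M.targets.card) ≤ M.searchBound :=
    Nat.pow_le_pow_right two_pos (Nat.mul_le_mul hn hn)
  rw [mem_encLang_iff, NFA.mem_accepts, encode_eq] at hacc
  obtain ⟨qf, hqf, hq⟩ := hacc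
  rw [NFA.evalFrom_append] at hq
  obtain ⟨es', hlen, hval, hvc', hq'⟩ :=
    M.exists_small_edges (M.toNFA.evalFrom_cons_subset M.step_subset_targets _ _ _) hq
  have hacc' : ∀ k', (∀ R, M.toNFA.evalFrom R (thresholdTok k') =
      M.toNFA.evalFrom R (thresholdTok k)) → encode k' es' ∈ encLang M := fun k' hk' => by
    rw [mem_encLang_iff, NFA.mem_accepts, encode_eq, NFA.evalFrom_append, hk']
    exact ⟨qf, hqf, hq'⟩
  have hval' : ∀ e ∈ es', e.1 < M.searchBound ∧ e.2 < M.searchBound := fun e he =>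
    ⟨(hval e he).1.trans_le hB₂, (hval e he).2.trans_le hB₂⟩
  rcases lt_or_ge k M.searchBound with hk | hk
  · exact ⟨k, by omega, es', by omega, hval', hacc' k fun _ => rfl, hvc' k hvc⟩
  · obtain ⟨k', hk'₁, hk'₂, hk'⟩ := M.exists_evalFrom_thresholdTok_eq hk
    exact ⟨k', by omega, es', by omega, hval', hacc' k' hk', hasVC_of_length_le (by omega)⟩

end NFAEnc

section Computability

open Primrec

theorem Primrec.list_sublists {α : Type*} [Primcodable α] : Primrec (@List.sublists α) :=
  (list_foldr .id (const [[]]) (list_flatMap (snd.comp snd)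
    (list_cons.comp snd (list_cons.comp (list_cons.comp (fst.comp (snd.comp fst)) snd)
      (const []))).to₂).to₂).of_eq fun _ => rfl

theorem Primrec.list_replicate {α : Type*} [Primcodable α] : Primrec₂ (@List.replicate α) :=
  (list_map (list_range.comp fst) (snd.comp fst).to₂).of_eq fun p => by simp

theorem primrecRel_mem {α : Type*} [Primcodable α] : PrimrecRel fun (a : α) (l : List α) => a ∈ l :=
  ((PrimrecRel.exists_mem_list Primrec.eq).comp snd fst).of_eq fun _ => by simp

def stepList (T : List (ℕ × Letter × ℕ)) (R : List ℕ) (c : Letter) : List ℕ :=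
  (T.filter fun t => t.1 ∈ R ∧ t.2.1 = c).map fun t => t.2.2

theorem primrec_stepList :
    Primrec₂ fun (T : List (ℕ × Letter × ℕ)) (p : List ℕ × Letter) => stepList T p.1 p.2 := by
  have h : PrimrecRel fun (t : ℕ × Letter × ℕ) (p : List ℕ × Letter) => t.1 ∈ p.1 ∧ t.2.1 = p.2 :=
    PrimrecPred.and (primrecRel_mem.comp (fst.comp fst) (fst.comp snd))
      (Primrec.eq.comp (fst.comp (snd.comp fst)) (snd.comp snd))
  exact (list_map h.listFilter (snd.comp (snd.comp snd)).to₂).to₂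

theorem NFAEnc.evalFrom_eq_foldl_stepList (M : NFAEnc) (w : Word) (R : List ℕ) :
    M.toNFA.evalFrom {q | q ∈ R} w = {q | q ∈ w.foldl (stepList M.1) R} := by
  induction w generalizing R with
  | nil => rfl
  | cons c w ih =>
    rw [NFA.evalFrom_cons, List.foldl_cons, ← ih]
    congr 1
    ext q
    simp [stepList, NFA.mem_stepSet, NFAEnc.toNFA, and_comm]

theorem NFAEnc.mem_encLang_iff_foldl (M : NFAEnc) (w : Word) :
    w ∈ encLang M ↔ ∃ q ∈ M.2.2, q ∈ w.foldl (stepList M.1) [M.2.1] := by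
  have hstart : M.toNFA.start = {q | q ∈ [M.2.1]} := by simp [NFAEnc.toNFA]
  rw [M.mem_encLang_iff, NFA.mem_accepts, hstart, M.evalFrom_eq_foldl_stepList]
  rfl

theorem primrecRel_mem_encLang : PrimrecRel fun (M : NFAEnc) (w : Word) => w ∈ encLang M := by
  have hrun : Primrec fun p : NFAEnc × Word => p.2.foldl (stepList p.1.1) [p.1.2.1] :=
    list_foldl snd (list_cons.comp (fst.comp (snd.comp fst)) (const []))
      (primrec_stepList.comp (fst.comp (fst.comp fst)) snd).to₂
  have hacc : PrimrecRel fun (q : ℕ) (p : NFAEnc × Word) =>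
      q ∈ p.2.foldl (stepList p.1.1) [p.1.2.1] :=
    primrecRel_mem.comp fst (hrun.comp snd)
  exact (hacc.exists_mem_list.comp (snd.comp (snd.comp fst)) .id).of_eq
    fun p => (NFAEnc.mem_encLang_iff_foldl p.1 p.2).symm

theorem primrecRel_hasVC :
    PrimrecRel fun (es : List (ℕ × ℕ)) (k : ℕ) => HasVC (graphOf es) k := by
  have hcov : PrimrecRel fun (e : ℕ × ℕ) (C : List ℕ) => e.1 = e.2 ∨ e.1 ∈ C ∨ e.2 ∈ C :=
    PrimrecPred.or (Primrec.eq.comp (fst.comp fst) (snd.comp fst))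
      (PrimrecPred.or (primrecRel_mem.comp (fst.comp fst) snd)
        (primrecRel_mem.comp (snd.comp fst) snd))
  have hcand : PrimrecRel fun (C : List ℕ) (p : List (ℕ × ℕ) × ℕ) =>
      C.length ≤ p.2 ∧ ∀ e ∈ p.1, e.1 = e.2 ∨ e.1 ∈ C ∨ e.2 ∈ C :=
    PrimrecPred.and (nat_le.comp (list_length.comp fst) (snd.comp snd))
      (hcov.forall_mem_list.comp (fst.comp snd) fst)
  have hverts : Primrec fun es : List (ℕ × ℕ) => es.map Prod.fst ++ es.map Prod.snd :=
    list_append.comp (list_map .id (fst.comp snd).to₂) (list_map .id (snd.comp snd).to₂)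
  exact (hcand.exists_mem_list.comp (list_sublists.comp (hverts.comp fst)) .id).of_eq
    fun _ => hasVC_graphOf_iff_sublists.symm

theorem primrec_encode : Primrec₂ encode := by
  have htok : ∀ a b c : Letter, Primrec fun n => a :: (List.replicate n b ++ [c]) := fun a b c =>
    list_cons.comp (const a) (list_append.comp (list_replicate.comp .id (const b)) (const [c]))
  have hedge : Primrec fun e : ℕ × ℕ => leftTok e.1 ++ rightTok e.2 :=
    list_append.comp ((htok _ _ _).comp fst) ((htok _ _ _).comp snd)
  exact (list_append.comp ((htok _ _ _).comp fst)
    (list_flatten.comp (list_map snd (hedge.comp snd).to₂))).to₂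

theorem sublist_flatten_replicate {α : Type*} {l P : List α} {n : ℕ} (hl : l.length ≤ n)
    (hP : ∀ x ∈ l, x ∈ P) : l.Sublist (List.replicate n P).flatten := by
  induction l generalizing n with
  | nil => exact List.nil_sublist _
  | cons x l ih =>
    cases n with
    | zero => simp at hl
    | succ n =>
      rw [List.replicate_succ, List.flatten_cons]
      exact (List.singleton_sublist.2 (hP x (by simp))).append
        (ih (by simpa using hl) fun y hy => hP y (by simp [hy]))

def candidates (B : ℕ) : List (List (ℕ × ℕ)) :=
  (List.replicate B (List.range B ×ˢ List.range B)).flatten.sublists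

theorem mem_candidates {B : ℕ} {es : List (ℕ × ℕ)} (hlen : es.length ≤ B)
    (hval : ∀ e ∈ es, e.1 < B ∧ e.2 < B) : es ∈ candidates B :=
  List.mem_sublists.2 (sublist_flatten_replicate hlen fun e he =>
    List.mem_product.2 ⟨List.mem_range.2 (hval e he).1, List.mem_range.2 (hval e he).2⟩)

theorem primrec_candidates : Primrec candidates := by
  have hprod : Primrec fun B => List.range B ×ˢ List.range B :=
    (list_flatMap list_range
      (list_map (list_range.comp fst) (pair (snd.comp fst) snd).to₂).to₂).of_eq fun _ => rfl
  exact list_sublists.comp (list_flatten.comp (list_replicate.comp .id hprod))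

theorem primrec_searchBound : Primrec NFAEnc.searchBound :=
  (Primrec₂.unpaired'.1 Nat.Primrec.pow).comp (const 2)
    (nat_mul.comp (list_length.comp fst) (list_length.comp fst))

theorem primrecPred_exists_bounded_witness :
    PrimrecPred fun M : NFAEnc => ∃ k ∈ List.range (2 * M.searchBound),
      ∃ es ∈ candidates M.searchBound, encode k es ∈ encLang M ∧ HasVC (graphOf es) k := by
  have hwitness : PrimrecRel fun (es : List (ℕ × ℕ)) (p : ℕ × NFAEnc) =>
      encode p.1 es ∈ encLang p.2 ∧ HasVC (graphOf es) p.1 :=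
    PrimrecPred.and
      (primrecRel_mem_encLang.comp (snd.comp snd) (primrec_encode.comp (fst.comp snd) fst))
      (primrecRel_hasVC.comp fst (fst.comp snd))
  have hsearch : PrimrecRel fun (k : ℕ) (M : NFAEnc) =>
      ∃ es ∈ candidates M.searchBound, encode k es ∈ encLang M ∧ HasVC (graphOf es) k :=
    hwitness.exists_mem_list.comp (primrec_candidates.comp (primrec_searchBound.comp snd)) .id
  exact hsearch.exists_mem_list.comp
    (list_range.comp (nat_mul.comp (const 2) primrec_searchBound)) .id

end Computability

/-- `int_Reg(Vertex Cover)` is decidable: the predicate on (finite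
encodings of) NFAs `M` over `Σ`, asserting that some `w ∈ L(M) ∩ Enc` decodes to a
positive Vertex Cover instance, is computable. -/
theorem stmt10 :
    ComputablePred (fun M : NFAEnc =>
      ∃ w : Word, w ∈ encLang M ∧ w ∈ Enc ∧
        ∃ (G : EncGraph) (k : ℕ), decodesTo w G k ∧ HasVC G k) := by
  refine primrecPred_exists_bounded_witness.computablePred.of_eq fun M => ⟨?_, ?_⟩
  · rintro ⟨k, -, es, -, hacc, hvc⟩
    exact ⟨_, hacc, ⟨k, es, rfl⟩, _, k, ⟨es, rfl, rfl⟩, hvc⟩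
  · rintro ⟨_, hacc, -, _, k, ⟨es, rfl, rfl⟩, hvc⟩
    obtain ⟨k', hk', es', hlen, hval, hacc', hvc'⟩ := M.exists_bounded_witness hacc hvc
    exact ⟨k', List.mem_range.2 hk', es', mem_candidates hlen hval, hacc', hvc'⟩
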